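/- If f : U → W is of class C² over a topological ring K with dense unit group, then second partial derivatives commute: ∂_v ∂_w f(x) = ∂_w ∂_v f(x) for all x ∈ U and v, w ∈ V. -/

import Mathlib

/-! For invertible `s, t`, both `f^[2]((x,v,s),(w,0,0),t)` and `f^[2]((x,w,t),(v,0,0),s)`
are `(st)⁻¹` times the second difference `f(x+sv+tw) - f(x+sv) - f(x+tw) + f(x)`, which is
symmetric under `(v,s) ↔ (w,t)`. As functions of `(s,t)` both are continuous on an open
neighbourhood of `(0,0)`, in which pairs of units are dense, so they also agree at `(0,0)`. -/

open Set

section DifferenceQuotients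

variable (K : Type*) {E : Type*} [CommRing K] [AddCommGroup E] [Module K E]

/-- The set `U^[1]` on which the difference quotient `f^[1]` of a map on `U` lives. -/
def diffQuotDomain (U : Set E) : Set (E × E × K) :=
  {p | p.1 ∈ U ∧ p.1 + p.2.2 • p.2.1 ∈ U}

def secondDiffDomain (U : Set E) (x v w : E) : Set (K × K) :=
  {p | x + p.1 • v ∈ U ∧ x + p.2 • w ∈ U ∧ x + p.1 • v + p.2 • w ∈ U}

variable {K} {U : Set E} {x v w : E} {s t : K}

theorem zero_mem_secondDiffDomain (hx : x ∈ U) : (0, 0) ∈ secondDiffDomain K U x v w := by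
  simp [secondDiffDomain, hx]

theorem swap_mem_secondDiffDomain {p : K × K} (hp : p ∈ secondDiffDomain K U x v w) :
    p.swap ∈ secondDiffDomain K U x w v :=
  ⟨hp.2.1, hp.1, by rw [add_right_comm]; exact hp.2.2⟩

theorem mk_add_smul_mk_zero_zero (x v w : E) (s t : K) :
    ((x, v, s) : E × E × K) + t • ((w, 0, 0) : E × E × K) = (x + t • w, v, s) := by
  simp

theorem mk_mem_diffQuotDomain_diffQuotDomain (hx : x ∈ U)
    (hst : (s, t) ∈ secondDiffDomain K U x v w) :
    ((x, v, s), (w, 0, 0), t) ∈ diffQuotDomain K (diffQuotDomain K U) := by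
  obtain ⟨hv, hw, hvw⟩ := hst
  refine ⟨⟨hx, hv⟩, ?_⟩
  change (x, v, s) + t • ((w, 0, 0) : E × E × K) ∈ diffQuotDomain K U
  rw [mk_add_smul_mk_zero_zero]
  exact ⟨hw, by rwa [add_right_comm]⟩

section Topology

variable [TopologicalSpace K] [TopologicalSpace E]

theorem isOpen_secondDiffDomain [ContinuousAdd E] [ContinuousSMul K E] (hU : IsOpen U)
    (x v w : E) : IsOpen (secondDiffDomain K U x v w) := by
  refine (hU.preimage ?_).inter ((hU.preimage ?_).inter (hU.preimage ?_)) <;>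
    fun_prop

theorem continuousOn_diffQuot_diffQuot {F : Type*} [TopologicalSpace F]
    {f2 : (E × E × K) × (E × E × K) × K → F}
    (hf2 : ContinuousOn f2 (diffQuotDomain K (diffQuotDomain K U))) (hx : x ∈ U) :
    ContinuousOn (fun p : K × K => f2 ((x, v, p.1), (w, 0, 0), p.2))
      (secondDiffDomain K U x v w) :=
  hf2.comp (by fun_prop) fun _ hp => mk_mem_diffQuotDomain_diffQuotDomain hx hp

end Topology

variable {F : Type*} [AddCommGroup F] [Module K F]

def HasDiffQuotOn (U : Set E) (f : E → F) (f1 : E × E × K → F) : Prop :=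
  ∀ (x v : E) (t : K), x ∈ U → x + t • v ∈ U →
    f (x + t • v) - f x = t • f1 (x, v, t)

variable {f : E → F} {f1 : E × E × K → F} {f2 : (E × E × K) × (E × E × K) × K → F}

theorem smul_smul_diffQuot_diffQuot (hf1 : HasDiffQuotOn U f f1)
    (hf2 : HasDiffQuotOn (diffQuotDomain K U) f1 f2) (hx : x ∈ U)
    (hst : (s, t) ∈ secondDiffDomain K U x v w) :
    s • t • f2 ((x, v, s), (w, 0, 0), t) =
      f (x + s • v + t • w) - f (x + s • v) - f (x + t • w) + f x := by
  obtain ⟨hp, hq⟩ := mk_mem_diffQuotDomain_diffQuotDomain hx hst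
  obtain ⟨hv, hw, hvw⟩ := hst
  rw [← hf2 _ _ _ hp hq, mk_add_smul_mk_zero_zero, smul_sub,
    ← hf1 _ _ _ hw (by rwa [add_right_comm]), ← hf1 _ _ _ hx hv, add_right_comm x]
  abel

theorem diffQuot_diffQuot_comm_of_isUnit (hf1 : HasDiffQuotOn U f f1)
    (hf2 : HasDiffQuotOn (diffQuotDomain K U) f1 f2) (hx : x ∈ U)
    (hst : (s, t) ∈ secondDiffDomain K U x v w) (hs : IsUnit s) (ht : IsUnit t) :
    f2 ((x, v, s), (w, 0, 0), t) = f2 ((x, w, t), (v, 0, 0), s) := by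
  rw [← ht.smul_left_cancel, ← hs.smul_left_cancel,
    smul_smul_diffQuot_diffQuot hf1 hf2 hx hst, smul_comm s t,
    smul_smul_diffQuot_diffQuot hf1 hf2 hx (swap_mem_secondDiffDomain hst), add_right_comm x]
  abel

end DifferenceQuotients

theorem second_partials_commute_general
    {K : Type*} [CommRing K] [TopologicalSpace K]
    {V W : Type*}
    [AddCommGroup V] [Module K V] [TopologicalSpace V]
    [IsTopologicalAddGroup V] [ContinuousSMul K V]
    [AddCommGroup W] [Module K W] [TopologicalSpace W]
    [T2Space W]
    (hdense : Dense {t : K | IsUnit t})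
    {U : Set V} (hU : IsOpen U)
    (f : V → W) (f1 : V × V × K → W)
    (f2 : (V × V × K) × (V × V × K) × K → W)
    (hf1d : ∀ (x v : V) (t : K), x ∈ U → x + t • v ∈ U →
      f (x + t • v) - f x = t • f1 (x, v, t))
    (hf2c : ContinuousOn f2 {q : (V × V × K) × (V × V × K) × K |
      (q.1.1 ∈ U ∧ q.1.1 + q.1.2.2 • q.1.2.1 ∈ U) ∧
      ((q.1 + q.2.2 • q.2.1).1 ∈ U ∧
        (q.1 + q.2.2 • q.2.1).1 + (q.1 + q.2.2 • q.2.1).2.2 • (q.1 + q.2.2 • q.2.1).2.1 ∈ U)})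
    (hf2d : ∀ (p q : V × V × K) (t : K),
      (p.1 ∈ U ∧ p.1 + p.2.2 • p.2.1 ∈ U) →
      ((p + t • q).1 ∈ U ∧ (p + t • q).1 + (p + t • q).2.2 • (p + t • q).2.1 ∈ U) →
      f1 (p + t • q) - f1 p = t • f2 (p, q, t)) :
    ∀ x ∈ U, ∀ v w : V,
      f2 ((x, v, 0), (w, 0, 0), 0) = f2 ((x, w, 0), (v, 0, 0), 0) := by
  intro x hx v w
  set S := secondDiffDomain K U x v w
  have hunits : S ⊆ closure (S ∩ {p : K × K | IsUnit p.1 ∧ IsUnit p.2}) :=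
    (hdense.prod hdense).open_subset_closure_inter (isOpen_secondDiffDomain hU x v w)
  have hsym : EqOn (fun p : K × K => f2 ((x, v, p.1), (w, 0, 0), p.2))
      (fun p => f2 ((x, w, p.2), (v, 0, 0), p.1)) S := by
    refine EqOn.of_subset_closure ?_ (continuousOn_diffQuot_diffQuot hf2c hx) ?_
      inter_subset_left hunits
    · rintro ⟨s, t⟩ ⟨hst, hs, ht⟩
      exact diffQuot_diffQuot_comm_of_isUnit hf1d hf2d hx hst hs ht
    · exact (continuousOn_diffQuot_diffQuot hf2c hx).comp continuous_swap.continuousOn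
        fun _ hp => swap_mem_secondDiffDomain hp
  exact hsym (zero_mem_secondDiffDomain hx)

/-- Schwarz' lemma in the Bertram–Glöckner–Neeb calculus: for a `C²`-map `f`, second
partial derivatives commute: `∂_v ∂_w f(x) = ∂_w ∂_v f(x)`, i.e.
`f^[2]((x,v,0),(w,0,0),0) = f^[2]((x,w,0),(v,0,0),0)`. -/
theorem second_partials_commute
    {K : Type*} [CommRing K] [TopologicalSpace K] [IsTopologicalRing K]
    {V W : Type*}
    [AddCommGroup V] [Module K V] [TopologicalSpace V]
    [IsTopologicalAddGroup V] [ContinuousSMul K V]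
    [AddCommGroup W] [Module K W] [TopologicalSpace W]
    [IsTopologicalAddGroup W] [ContinuousSMul K W] [T2Space W]
    (hdense : Dense {t : K | IsUnit t})
    {U : Set V} (hU : IsOpen U)
    (f : V → W) (f1 : V × V × K → W)
    (f2 : (V × V × K) × (V × V × K) × K → W)
    (hf1c : ContinuousOn f1 {p : V × V × K | p.1 ∈ U ∧ p.1 + p.2.2 • p.2.1 ∈ U})
    (hf1d : ∀ (x v : V) (t : K), x ∈ U → x + t • v ∈ U →
      f (x + t • v) - f x = t • f1 (x, v, t))
    (hf2c : ContinuousOn f2 {q : (V × V × K) × (V × V × K) × K |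
      (q.1.1 ∈ U ∧ q.1.1 + q.1.2.2 • q.1.2.1 ∈ U) ∧
      ((q.1 + q.2.2 • q.2.1).1 ∈ U ∧
        (q.1 + q.2.2 • q.2.1).1 + (q.1 + q.2.2 • q.2.1).2.2 • (q.1 + q.2.2 • q.2.1).2.1 ∈ U)})
    (hf2d : ∀ (p q : V × V × K) (t : K),
      (p.1 ∈ U ∧ p.1 + p.2.2 • p.2.1 ∈ U) →
      ((p + t • q).1 ∈ U ∧ (p + t • q).1 + (p + t • q).2.2 • (p + t • q).2.1 ∈ U) →
      f1 (p + t • q) - f1 p = t • f2 (p, q, t)) :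
    ∀ x ∈ U, ∀ v w : V,
      f2 ((x, v, 0), (w, 0, 0), 0) = f2 ((x, w, 0), (v, 0, 0), 0) :=
  second_partials_commute_general hdense hU f f1 f2 hf1d hf2c hf2d
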